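/- arXiv:2010.01458 — 5 statements merged into one kernel-verified Lean document; each statement's English description precedes it below -/
import Mathlib

section
/- For any activation function σ ∈ L¹(ℝ) and any a ≠ 0 with σ̂(a) ≠ 0, the plane wave e^{iω·x} admits the representation e^{iω·x} = (1/(2π σ̂(a))) ∫_ℝ σ(a^{-1}ω·x + b) e^{-iab} db. -/
open MeasureTheory RealInnerProductSpace

/-- Plane wave representation through an integrable activation function:
if `σ̂(a) = (1/2π)∫ σ(t)e^{-iat} dt ≠ 0` for some `a ≠ 0`, then
`e^{iω·x} = (1/(2π σ̂(a))) ∫ σ(a⁻¹ ω·x + b) e^{-iab} db`. -/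
theorem plane_wave_representation {d : ℕ}
    (σ : ℝ → ℝ) (hσ : Integrable σ)
    (a : ℝ) (ha : a ≠ 0) (S : ℂ)
    (hS : S = (1 / (2 * Real.pi) : ℝ)
        * ∫ t : ℝ, (σ t : ℂ) * Complex.exp (-(Complex.I * a * t)))
    (hS0 : S ≠ 0)
    (ω x : EuclideanSpace ℝ (Fin d)) :
    Complex.exp (Complex.I * (⟪ω, x⟫ : ℝ))
      = (1 / (2 * Real.pi * S))
          * ∫ b : ℝ, (σ (a⁻¹ * ⟪ω, x⟫ + b) : ℂ) * Complex.exp (-(Complex.I * a * b)) := by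
  set r : ℝ := ⟪ω, x⟫ with hr
  set c : ℝ := a⁻¹ * r with hc
  have hac : (a : ℂ) * (c : ℂ) = (r : ℂ) := by
    have : a * c = r := by
      rw [hc, mul_inv_cancel_left₀ ha]
    exact_mod_cast this
  have key : (∫ b : ℝ, (σ (c + b) : ℂ) * Complex.exp (-(Complex.I * a * b)))
      = Complex.exp (Complex.I * r) * ∫ t : ℝ, (σ t : ℂ) * Complex.exp (-(Complex.I * a * t)) := by
    rw [← integral_add_left_eq_self
      (fun t : ℝ => (σ t : ℂ) * Complex.exp (-(Complex.I * a * t))) c,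
      ← MeasureTheory.integral_const_mul]
    congr 1
    funext b
    rw [mul_left_comm, ← Complex.exp_add, ← hac]
    push_cast
    ring_nf
  have hint : (∫ t : ℝ, (σ t : ℂ) * Complex.exp (-(Complex.I * a * t)))
      = (2 * Real.pi : ℝ) * S := by
    have hpi : ((2 * Real.pi : ℝ) : ℂ) ≠ 0 := by
      simp [Real.pi_ne_zero]
    rw [hS]
    push_cast
    push_cast at hpi
    field_simp
  rw [key, hint]
  have hpi : ((2 * Real.pi : ℝ) : ℂ) ≠ 0 := by
    simp [Real.pi_ne_zero]
  push_cast at hpi ⊢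
  field_simp
end

section
/- For any integer k ≥ 0, any ω ∈ ℝ^d, and any x with ‖x‖ ≤ T, letting ω̄ = ω/‖ω‖, one has e^{iω·x} = ∑_{j=0}^k (iω·x)^j/j! + (i^{k+1}/k!)‖ω‖^{k+1} ∫_0^T [(ω̄·x - t)_+^k e^{i‖ω‖t} + (-1)^{k-1}(-ω̄·x - t)_+^k e^{-i‖ω‖t}] dt. -/
open MeasureTheory RealInnerProductSpace

/-- The truncated power function `z ↦ (z)_+^k` (Heaviside convention for `k = 0`). -/
noncomputable def tpow (k : ℕ) (z : ℝ) : ℝ := if 0 < z then z ^ k else 0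

/-!
With `s = ω̄ · x` we have `ω · x = ‖ω‖ s` and `|s| ≤ ‖x‖ ≤ T`. Taylor's formula with integral
remainder for `t ↦ exp (c t)` is applied at `(c, z) = (i‖ω‖, s)` if `s ≥ 0` and at
`(c, z) = (-i‖ω‖, -s)` if `s < 0`. On `[0, T]` the truncated power `(z - t)_+^k` is `(z - t)^k`
cut off at `t = z`, so one summand of the integrand integrates to the Taylor remainder and the
other vanishes identically.
-/

open Complex intervalIntegral

theorem hasDerivAt_cexp_mul_ofReal (c : ℂ) (t : ℝ) :
    HasDerivAt (fun t : ℝ => cexp (c * t)) (c * cexp (c * t)) t := by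
  simpa [mul_comm] using ((hasDerivAt_id (t : ℂ)).const_mul c).cexp.comp_ofReal

theorem cexp_mul_eq_one_add_integral (c : ℂ) (z : ℝ) :
    cexp (c * z) = 1 + c * ∫ t in (0 : ℝ)..z, cexp (c * t) := by
  rw [← intervalIntegral.integral_const_mul, integral_eq_sub_of_hasDerivAt
    (fun t _ => hasDerivAt_cexp_mul_ofReal c t) (Continuous.intervalIntegrable (by fun_prop) _ _)]
  simp

theorem integral_sub_pow_mul_cexp_succ (c : ℂ) (z : ℝ) (k : ℕ) :
    (k + 1) * ∫ t in (0 : ℝ)..z, ((z : ℂ) - t) ^ k * cexp (c * t)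
      = (z : ℂ) ^ (k + 1) + c * ∫ t in (0 : ℝ)..z, ((z : ℂ) - t) ^ (k + 1) * cexp (c * t) := by
  have hderiv (t : ℝ) : HasDerivAt (fun t : ℝ => -((z : ℂ) - t) ^ (k + 1) * cexp (c * t))
      ((k + 1) * (((z : ℂ) - t) ^ k * cexp (c * t))
        - c * (((z : ℂ) - t) ^ (k + 1) * cexp (c * t))) t := by
    have hsub : HasDerivAt (fun t : ℝ => (z : ℂ) - t) (-1) t := by
      simpa using (hasDerivAt_id t).ofReal_comp.const_sub (z : ℂ)
    refine ((hsub.fun_pow (k + 1)).fun_neg.fun_mul (hasDerivAt_cexp_mul_ofReal c t)).congr_deriv ?_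
    rw [Nat.add_sub_cancel]
    push_cast
    ring
  have hFTC := integral_eq_sub_of_hasDerivAt (a := 0) (b := z) (fun t _ => hderiv t)
    (Continuous.intervalIntegrable (by fun_prop) _ _)
  rw [integral_sub (Continuous.intervalIntegrable (by fun_prop) _ _)
    (Continuous.intervalIntegrable (by fun_prop) _ _), intervalIntegral.integral_const_mul,
    intervalIntegral.integral_const_mul] at hFTC
  simp only [sub_self, ne_eq, Nat.add_eq_zero_iff, one_ne_zero, and_false, not_false_eq_true,
    zero_pow, neg_zero, zero_mul, ofReal_zero, sub_zero, mul_zero, exp_zero, mul_one,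
    sub_neg_eq_add, zero_add] at hFTC
  linear_combination hFTC

theorem cexp_mul_eq_sum_add_integral (c : ℂ) (z : ℝ) (k : ℕ) :
    cexp (c * z) = ∑ j ∈ Finset.range (k + 1), (c * z) ^ j / (j.factorial : ℂ)
      + c ^ (k + 1) / (k.factorial : ℂ)
        * ∫ t in (0 : ℝ)..z, ((z : ℂ) - t) ^ k * cexp (c * t) := by
  induction k with
  | zero => simpa using cexp_mul_eq_one_add_integral c z
  | succ k ih =>
    have hk : ((k : ℂ) + 1) ≠ 0 := by exact_mod_cast k.succ_ne_zero
    have hfac : (k.factorial : ℂ) ≠ 0 := by exact_mod_cast k.factorial_ne_zero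
    rw [Finset.sum_range_succ, ih, Nat.factorial_succ]
    push_cast
    field_simp
    linear_combination c ^ (k + 1) * integral_sub_pow_mul_cexp_succ c z k

theorem ofReal_tpow_sub_mul_eq_indicator (k : ℕ) (s : ℝ) (f : ℝ → ℂ) :
    (fun t => (tpow k (s - t) : ℂ) * f t)
      = (Set.Iio s).indicator (fun t => ((s : ℂ) - t) ^ k * f t) := by
  ext t
  by_cases ht : t < s <;> simp [tpow, Set.indicator, ht, sub_pos]

theorem intervalIntegrable_tpow_sub_mul (k : ℕ) (s : ℝ) {f : ℝ → ℂ} {a b : ℝ}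
    (hf : IntervalIntegrable f volume a b) :
    IntervalIntegrable (fun t => (tpow k (s - t) : ℂ) * f t) volume a b := by
  rw [ofReal_tpow_sub_mul_eq_indicator, intervalIntegrable_iff]
  exact (intervalIntegrable_iff.mp (hf.continuousOn_mul (by fun_prop))).indicator
    measurableSet_Iio

theorem integral_tpow_sub_mul_eq_setIntegral_Ioo (k : ℕ) {s T : ℝ} (hT : 0 ≤ T) (hsT : s ≤ T)
    (f : ℝ → ℂ) :
    ∫ t in (0 : ℝ)..T, (tpow k (s - t) : ℂ) * f t
      = ∫ t in Set.Ioo 0 s, ((s : ℂ) - t) ^ k * f t := by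
  have hset : Set.Ioc 0 T ∩ Set.Iio s = Set.Ioo 0 s :=
    Set.ext fun t => ⟨fun ⟨⟨h0, _⟩, hs⟩ => ⟨h0, hs⟩, fun ⟨h0, hs⟩ => ⟨⟨h0, hs.le.trans hsT⟩, hs⟩⟩
  rw [integral_of_le hT, ofReal_tpow_sub_mul_eq_indicator, setIntegral_indicator measurableSet_Iio,
    hset]

theorem integral_tpow_sub_mul_of_nonpos (k : ℕ) {s T : ℝ} (hs : s ≤ 0) (hT : 0 ≤ T)
    (f : ℝ → ℂ) :
    ∫ t in (0 : ℝ)..T, (tpow k (s - t) : ℂ) * f t = 0 := by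
  rw [integral_tpow_sub_mul_eq_setIntegral_Ioo k hT (hs.trans hT), Set.Ioo_eq_empty hs.not_gt,
    Measure.restrict_empty, integral_zero_measure]

theorem integral_tpow_sub_mul_of_nonneg (k : ℕ) {s T : ℝ} (hs : 0 ≤ s) (hsT : s ≤ T)
    (f : ℝ → ℂ) :
    ∫ t in (0 : ℝ)..T, (tpow k (s - t) : ℂ) * f t = ∫ t in (0 : ℝ)..s, ((s : ℂ) - t) ^ k * f t := by
  rw [integral_tpow_sub_mul_eq_setIntegral_Ioo k (hs.trans hsT) hsT, integral_of_le hs,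
    integral_Ioc_eq_integral_Ioo]

theorem cexp_mul_eq_sum_add_integral_tpow (k : ℕ) (c : ℂ) {s T : ℝ} (hsT : |s| ≤ T) :
    cexp (c * s) = ∑ j ∈ Finset.range (k + 1), (c * s) ^ j / (j.factorial : ℂ)
      + c ^ (k + 1) / (k.factorial : ℂ)
        * ∫ t in (0 : ℝ)..T, (tpow k (s - t) : ℂ) * cexp (c * t)
            + (-1 : ℂ) ^ (k + 1) * (tpow k (-s - t) : ℂ) * cexp (-(c * t)) := by
  have hT : 0 ≤ T := (abs_nonneg s).trans hsT
  simp_rw [mul_assoc ((-1 : ℂ) ^ (k + 1))]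
  rw [integral_add
    (intervalIntegrable_tpow_sub_mul k s (Continuous.intervalIntegrable (by fun_prop) _ _))
    ((intervalIntegrable_tpow_sub_mul k (-s) (f := fun t : ℝ => cexp (-(c * t)))
      (Continuous.intervalIntegrable (by fun_prop) _ _)).const_mul _),
    intervalIntegral.integral_const_mul]
  rcases le_total 0 s with hs | hs
  · rw [integral_tpow_sub_mul_of_nonpos k (neg_nonpos.mpr hs) hT,
      integral_tpow_sub_mul_of_nonneg k hs ((le_abs_self s).trans hsT),
      cexp_mul_eq_sum_add_integral]
    ring
  · have hneg := cexp_mul_eq_sum_add_integral (-c) (-s) k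
    simp only [ofReal_neg, neg_mul, mul_neg, neg_neg] at hneg
    rw [integral_tpow_sub_mul_of_nonpos k hs hT,
      integral_tpow_sub_mul_of_nonneg k (neg_nonneg.mpr hs) ((neg_le_abs s).trans hsT), hneg,
      ofReal_neg, neg_pow c]
    ring

theorem plane_wave_taylor_relu_remainder_general {d : ℕ} (k : ℕ)
    (ω : EuclideanSpace ℝ (Fin d)) (hω : ω ≠ 0)
    (T : ℝ)
    (x : EuclideanSpace ℝ (Fin d)) (hx : ‖x‖ ≤ T) :
    Complex.exp (Complex.I * (⟪ω, x⟫ : ℝ))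
      = (∑ j ∈ Finset.range (k + 1),
            (Complex.I * (⟪ω, x⟫ : ℝ)) ^ j / (j.factorial : ℂ))
        + (Complex.I ^ (k + 1) / (k.factorial : ℂ)) * (‖ω‖ : ℂ) ^ (k + 1)
            * ∫ t in (0:ℝ)..T,
                ((tpow k (⟪‖ω‖⁻¹ • ω, x⟫ - t) : ℝ) : ℂ)
                    * Complex.exp (Complex.I * ‖ω‖ * t)
                  + (-1 : ℂ) ^ (k + 1)
                    * ((tpow k (-⟪‖ω‖⁻¹ • ω, x⟫ - t) : ℝ) : ℂ)
                    * Complex.exp (-(Complex.I * ‖ω‖ * t)) := by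
  set s : ℝ := ⟪‖ω‖⁻¹ • ω, x⟫ with hs_def
  have hω' : ‖ω‖ ≠ 0 := norm_ne_zero_iff.mpr hω
  have hωx : I * (⟪ω, x⟫ : ℂ) = I * ‖ω‖ * s := by
    rw [hs_def, real_inner_smul_left, ofReal_mul, ofReal_inv, mul_assoc,
      mul_inv_cancel_left₀ (ofReal_ne_zero.mpr hω')]
  have hsT : |s| ≤ T := calc
    |s| ≤ ‖‖ω‖⁻¹ • ω‖ * ‖x‖ := abs_real_inner_le_norm _ _
    _ = ‖x‖ := by rw [norm_smul, norm_inv, norm_norm, inv_mul_cancel₀ hω', one_mul]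
    _ ≤ T := hx
  rw [hωx, cexp_mul_eq_sum_add_integral_tpow k (I * ‖ω‖) hsT, mul_pow]
  ring

/-- Taylor expansion of the plane wave with `ReLU^k` integral remainder:
for `‖x‖ ≤ T` and `ω̄ = ω/‖ω‖`,
`e^{iω·x} = ∑_{j=0}^k (iω·x)^j/j! + (i^{k+1}/k!)‖ω‖^{k+1}
  ∫₀^T [(ω̄·x-t)_+^k e^{i‖ω‖t} + (-1)^{k-1}(-ω̄·x-t)_+^k e^{-i‖ω‖t}] dt`. -/
theorem plane_wave_taylor_relu_remainder {d : ℕ} (k : ℕ)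
    (ω : EuclideanSpace ℝ (Fin d)) (hω : ω ≠ 0)
    (T : ℝ) (hT : 0 < T)
    (x : EuclideanSpace ℝ (Fin d)) (hx : ‖x‖ ≤ T) :
    Complex.exp (Complex.I * (⟪ω, x⟫ : ℝ))
      = (∑ j ∈ Finset.range (k + 1),
            (Complex.I * (⟪ω, x⟫ : ℝ)) ^ j / (j.factorial : ℂ))
        + (Complex.I ^ (k + 1) / (k.factorial : ℂ)) * (‖ω‖ : ℂ) ^ (k + 1)
            * ∫ t in (0:ℝ)..T,
                ((tpow k (⟪‖ω‖⁻¹ • ω, x⟫ - t) : ℝ) : ℂ)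
                    * Complex.exp (Complex.I * ‖ω‖ * t)
                  + (-1 : ℂ) ^ (k + 1)
                    * ((tpow k (-⟪‖ω‖⁻¹ • ω, x⟫ - t) : ℝ) : ℂ)
                    * Complex.exp (-(Complex.I * ‖ω‖ * t)) :=
  plane_wave_taylor_relu_remainder_general k ω hω T x hx
end

section
/- For |z| ≤ c, the complex exponential satisfies e^{iz} = ∑_{j=0}^k (iz)^j/j! + (i^{k+1}/k!) ∫_0^c [(z-u)_+^k e^{iu} + (-1)^{k-1}(-z-u)_+^k e^{-iu}] du. -/
open MeasureTheory

/-!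
Repeated integration by parts gives the classical remainder
`e^{az} = ∑_{j ≤ k} (az)^j/j! + a^{k+1}/k! ∫_0^z (z-u)^k e^{au} du`.
On `[0, c]` the two truncated powers of the kernel never both survive: for `z ≥ 0` only
`(z-u)_+^k` does, and it cuts the integral off at `z`; for `z ≤ 0` only `(-z-u)_+^k` does, and the
reflection `u ↦ -u` turns its integral into the same remainder up to the sign `(-1)^{k+1}`, which
the kernel's prefactor cancels.
-/

open Set Complex intervalIntegral
open scoped Nat

section ExpTaylor

theorem hasDerivAt_exp_mul_ofReal (a : ℂ) (x : ℝ) :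
    HasDerivAt (fun u : ℝ => exp (a * u)) (a * exp (a * x)) x := by
  simpa [mul_comm] using (((hasDerivAt_id (x : ℂ)).const_mul a).comp_ofReal).cexp

theorem mul_integral_exp_mul_ofReal (a : ℂ) (z : ℝ) :
    a * ∫ u in (0:ℝ)..z, exp (a * u) = exp (a * z) - 1 := by
  rw [← intervalIntegral.integral_const_mul,
    integral_eq_sub_of_hasDerivAt (fun x _ => hasDerivAt_exp_mul_ofReal a x)
      ((by fun_prop : Continuous fun u : ℝ => a * exp (a * u)).intervalIntegrable _ _)]
  simp

theorem integral_sub_pow_smul_exp_mul_ofReal (a : ℂ) (k : ℕ) (z : ℝ) :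
    (k + 1 : ℂ) * ∫ u in (0:ℝ)..z, (z - u) ^ k • exp (a * u)
      = (z : ℂ) ^ (k + 1) + a * ∫ u in (0:ℝ)..z, (z - u) ^ (k + 1) • exp (a * u) := by
  have hpow : ∀ x ∈ uIcc (0:ℝ) z,
      HasDerivAt (fun u : ℝ => (z - u) ^ (k + 1)) (-((k + 1) * (z - x) ^ k)) x := fun x _ => by
    simpa using ((hasDerivAt_id x).const_sub z).fun_pow (k + 1)
  have parts := integral_smul_deriv_eq_deriv_smul hpow
    (fun x _ => hasDerivAt_exp_mul_ofReal a x)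
    ((by fun_prop : Continuous _).intervalIntegrable _ _)
    ((by fun_prop : Continuous _).intervalIntegrable _ _)
  simp only [← mul_smul_comm, neg_smul, mul_smul, intervalIntegral.integral_neg] at parts
  rw [intervalIntegral.integral_const_mul, intervalIntegral.integral_smul] at parts
  simp only [sub_self, sub_zero, zero_pow k.succ_ne_zero, zero_smul, ofReal_zero, mul_zero,
    exp_zero, zero_sub, sub_neg_eq_add] at parts
  rw [Complex.real_smul, Complex.real_smul] at parts
  push_cast at parts
  linear_combination -parts

theorem exp_mul_ofReal_eq_sum_add_integral (a : ℂ) (k : ℕ) (z : ℝ) :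
    exp (a * z) = ∑ j ∈ Finset.range (k + 1), (a * z) ^ j / j !
      + a ^ (k + 1) / k ! * ∫ u in (0:ℝ)..z, (z - u) ^ k • exp (a * u) := by
  induction k with
  | zero =>
    simp only [zero_add, Finset.range_one, Finset.sum_singleton, pow_zero, Nat.factorial_zero,
      Nat.cast_one, div_one, pow_one, one_smul, mul_integral_exp_mul_ofReal]
    ring
  | succ k ih =>
    have hk : (k + 1 : ℂ) ≠ 0 := Nat.cast_add_one_ne_zero k
    have hfact : (k ! : ℂ) ≠ 0 := Nat.cast_ne_zero.mpr k.factorial_ne_zero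
    rw [Finset.sum_range_succ _ (k + 1), ih, Nat.factorial_succ, Nat.cast_mul, Nat.cast_succ]
    field_simp
    linear_combination a ^ (k + 1) * integral_sub_pow_smul_exp_mul_ofReal a k z

end ExpTaylor

section TruncatedPower

variable {E : Type*} [NormedAddCommGroup E] [NormedSpace ℝ E]

theorem tpow_of_nonpos (k : ℕ) {z : ℝ} (hz : z ≤ 0) : tpow k z = 0 :=
  if_neg hz.not_gt

theorem tpow_sub_smul_eq_indicator (k : ℕ) (z : ℝ) (f : ℝ → E) :
    (fun u => tpow k (z - u) • f u) = (Iio z).indicator (fun u => (z - u) ^ k • f u) := by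
  ext u
  by_cases hu : u < z <;> simp [tpow, indicator, hu, sub_pos]

theorem integral_tpow_sub_smul (k : ℕ) {a z c : ℝ} (haz : a ≤ z) (hzc : z ≤ c) (f : ℝ → E) :
    ∫ u in a..c, tpow k (z - u) • f u = ∫ u in a..z, (z - u) ^ k • f u := by
  have hdom : Ioc a c ∩ Iio z = Ioo a z := by
    ext u; simp only [mem_inter_iff, mem_Ioc, mem_Iio, mem_Ioo]; grind
  rw [integral_of_le (haz.trans hzc), integral_of_le haz, tpow_sub_smul_eq_indicator,
    setIntegral_indicator measurableSet_Iio, hdom, integral_Ioc_eq_integral_Ioo]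

theorem integral_neg_sub_pow_smul_comp_neg (k : ℕ) (z : ℝ) (f : ℝ → E) :
    ∫ u in (0:ℝ)..-z, (-z - u) ^ k • f (-u)
      = (-1 : ℝ) ^ (k + 1) • ∫ u in (0:ℝ)..z, (z - u) ^ k • f u := by
  have h := integral_comp_neg (a := 0) (b := -z) (fun u => (u - z) ^ k • f u)
  simp only [neg_neg, neg_zero] at h
  rw [show (fun u : ℝ => (-z - u) ^ k • f (-u)) = fun u => (-u - z) ^ k • f (-u) by ext; ring_nf,
    h, integral_symm, pow_succ, mul_neg_one, neg_smul,
    ← intervalIntegral.integral_smul ((-1 : ℝ) ^ k)]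
  congr 1
  refine integral_congr fun u _ => ?_
  rw [smul_smul, ← mul_pow]
  ring_nf

theorem integral_tpow_sub_smul_add_tpow_neg_sub_smul (k : ℕ) {z c : ℝ} (hz : |z| ≤ c)
    (f : ℝ → E) :
    ∫ u in (0:ℝ)..c, (tpow k (z - u) • f u + (-1 : ℝ) ^ (k + 1) • tpow k (-z - u) • f (-u))
      = ∫ u in (0:ℝ)..z, (z - u) ^ k • f u := by
  have hc : 0 ≤ c := (abs_nonneg z).trans hz
  rcases le_total 0 z with hz0 | hz0
  · have h : EqOn (fun u => tpow k (z - u) • f u + (-1 : ℝ) ^ (k + 1) • tpow k (-z - u) • f (-u))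
        (fun u => tpow k (z - u) • f u) (uIcc 0 c) := fun u hu => by
      rw [uIcc_of_le hc] at hu
      simp [tpow_of_nonpos k (show -z - u ≤ 0 by linarith [hu.1])]
    rw [integral_congr h, integral_tpow_sub_smul k hz0 ((le_abs_self z).trans hz)]
  · have h : EqOn (fun u => tpow k (z - u) • f u + (-1 : ℝ) ^ (k + 1) • tpow k (-z - u) • f (-u))
        (fun u => (-1 : ℝ) ^ (k + 1) • tpow k (-z - u) • f (-u)) (uIcc 0 c) := fun u hu => by
      rw [uIcc_of_le hc] at hu
      simp [tpow_of_nonpos k (show z - u ≤ 0 by linarith [hu.1])]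
    rw [integral_congr h, intervalIntegral.integral_smul,
      integral_tpow_sub_smul k (neg_nonneg.mpr hz0) ((neg_le_abs z).trans hz),
      integral_neg_sub_pow_smul_comp_neg, smul_smul, ← mul_pow, neg_one_mul, neg_neg, one_pow,
      one_smul]

end TruncatedPower

/-- Taylor expansion of `e^{iz}` with truncated-power integral remainder:
for `|z| ≤ c`,
`e^{iz} = ∑_{j=0}^k (iz)^j/j! + (i^{k+1}/k!) ∫₀^c [(z-u)_+^k e^{iu}
  + (-1)^{k-1}(-z-u)_+^k e^{-iu}] du`. -/
theorem exp_taylor_truncated_power_remainder (k : ℕ) (z c : ℝ) (hz : |z| ≤ c) :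
    Complex.exp (Complex.I * z)
      = (∑ j ∈ Finset.range (k + 1), (Complex.I * z) ^ j / (j.factorial : ℂ))
        + (Complex.I ^ (k + 1) / (k.factorial : ℂ))
            * ∫ u in (0:ℝ)..c,
                ((tpow k (z - u) : ℝ) : ℂ) * Complex.exp (Complex.I * u)
                  + (-1 : ℂ) ^ (k + 1) * ((tpow k (-z - u) : ℝ) : ℂ)
                      * Complex.exp (-(Complex.I * u)) := by
  have hkernel : (fun u : ℝ => ((tpow k (z - u) : ℝ) : ℂ) * exp (I * u)
      + (-1 : ℂ) ^ (k + 1) * ((tpow k (-z - u) : ℝ) : ℂ) * exp (-(I * u)))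
      = fun u => tpow k (z - u) • exp (I * u)
        + (-1 : ℝ) ^ (k + 1) • tpow k (-z - u) • exp (I * ↑(-u)) := by
    ext u
    simp only [real_smul, ofReal_neg, mul_neg, ofReal_pow, ofReal_one]
    ring
  rw [hkernel, integral_tpow_sub_smul_add_tpow_neg_sub_smul k hz (fun u : ℝ => exp (I * u)),
    exp_mul_ofReal_eq_sum_add_integral]
end

section
/- Let a_δ(u,v) = a(u,v) + δ^{-1}∑_{k=0}^{m-1}⟨B_D^k u, B_D^k v⟩_{L²(∂Ω)} be the penalized bilinear form, u the solution of the Dirichlet problem Lu = f with B_D^k u = 0 on ∂Ω, and u_δ the solution of the penalized mixed problem Lu_δ = f with B_D^k u_δ + δ B_N^k u_δ = 0. Then ‖u - u_δ‖_{a,δ}² ≤ 4δ ∑_{k=0}^{m-1}‖B_N^k u‖²_{L²(∂Ω)}, and consequently ‖u - u_δ‖_{a,δ} ≲ √δ ‖u‖_{H^{2m}(Ω)}. -/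
open RealInnerProductSpace

/-- Penalization error for the Dirichlet problem. Abstract setting: `a` is the
energy bilinear form, `P u v` represents `(Lu, v)_{L²(Ω)}`, and `B_D^k`, `B_N^k`
are the Dirichlet and Neumann boundary operators satisfying the Green identity
`(Lu,v) = a(u,v) - ∑_k ⟨B_N^k u, B_D^k v⟩_{∂Ω}`. If `u` solves the Dirichlet
problem (`P u · = F`, `B_D^k u = 0`) and `u_δ` solves the penalized problem
(`P u_δ · = F`, `B_D^k u_δ + δ B_N^k u_δ = 0`), then
`‖u - u_δ‖²_{a,δ} ≤ 4δ ∑_k ‖B_N^k u‖²_{L²(∂Ω)}`, and consequently, with the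
trace bound `∑_k (‖B_D^k u‖ + ‖B_N^k u‖) ≤ C ‖u‖_{2m,Ω}`,
`‖u - u_δ‖_{a,δ} ≤ 2√δ · C ‖u‖_{2m,Ω}`. -/
theorem penalized_dirichlet_error {V H : Type*} [AddCommGroup V] [Module ℝ V]
    [NormedAddCommGroup H] [InnerProductSpace ℝ H]
    (m : ℕ) (a P : V →ₗ[ℝ] V →ₗ[ℝ] ℝ)
    (hsym : ∀ v w, a v w = a w v)
    (hpsd : ∀ v, 0 ≤ a v v)
    (BD BN : Fin m → V →ₗ[ℝ] H)
    (hGreen : ∀ u v : V, P u v = a u v - ∑ k, ⟪BN k u, BD k v⟫)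
    (F : V →ₗ[ℝ] ℝ) (δ : ℝ) (hδ : 0 < δ)
    (u uδ : V)
    (hu : ∀ v, P u v = F v) (hBDu : ∀ k, BD k u = 0)
    (huδ : ∀ v, P uδ v = F v) (hBDN : ∀ k, BD k uδ + δ • BN k uδ = 0)
    (S2m : V → ℝ) (C : ℝ) (hC : 0 < C) (hS : 0 ≤ S2m u)
    (htrace : ∑ k, (‖BD k u‖ + ‖BN k u‖) ≤ C * S2m u) :
    (a (u - uδ) (u - uδ) + δ⁻¹ * ∑ k, ‖BD k (u - uδ)‖ ^ 2
        ≤ 4 * δ * ∑ k, ‖BN k u‖ ^ 2)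
    ∧ Real.sqrt (a (u - uδ) (u - uδ) + δ⁻¹ * ∑ k, ‖BD k (u - uδ)‖ ^ 2)
        ≤ 2 * Real.sqrt δ * C * S2m u := by
  have hδ' : δ ≠ 0 := ne_of_gt hδ
  set e := u - uδ with he
  -- a(e, v) = ∑ ⟪BN e, BD v⟫
  have key1 : ∀ v, a e v = ∑ k, ⟪BN k e, BD k v⟫ := by
    intro v
    have h3 : P u v = P uδ v := by rw [hu v, huδ v]
    have h12 : a u v - ∑ k, ⟪BN k u, BD k v⟫
        = a uδ v - ∑ k, ⟪BN k uδ, BD k v⟫ := by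
      rw [← hGreen u v, ← hGreen uδ v, h3]
    have hsum : ∑ k, ⟪BN k e, BD k v⟫
        = ∑ k, ⟪BN k u, BD k v⟫ - ∑ k, ⟪BN k uδ, BD k v⟫ := by
      rw [← Finset.sum_sub_distrib]
      refine Finset.sum_congr rfl fun k _ => ?_
      rw [he, map_sub, inner_sub_left]
    have hae : a e v = a u v - a uδ v := by
      rw [he, map_sub, LinearMap.sub_apply]
    rw [hae, hsum]
    linarith
  -- BD e = δ • BN uδ
  have key2 : ∀ k, BD k e = δ • BN k uδ := by
    intro k
    have h1 := hBDN k
    have h2 : BD k uδ = -(δ • BN k uδ) := eq_neg_of_add_eq_zero_left h1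
    rw [he, map_sub, hBDu k, zero_sub, h2, neg_neg]
  have key3 : ∀ k, BN k uδ = δ⁻¹ • BD k e := by
    intro k
    rw [key2 k, smul_smul, inv_mul_cancel₀ hδ', one_smul]
  set A := ∑ k, ‖BN k u‖ ^ 2 with hA
  set B := ∑ k, ‖BD k e‖ ^ 2 with hB
  have hAnn : 0 ≤ A := Finset.sum_nonneg fun k _ => sq_nonneg _
  have hBnn : 0 ≤ B := Finset.sum_nonneg fun k _ => sq_nonneg _
  -- a(e,e) = ∑ ⟪BN u, BD e⟫ - δ⁻¹ B
  have haee : a e e = (∑ k, ⟪BN k u, BD k e⟫) - δ⁻¹ * B := by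
    rw [key1 e]
    have hterm : ∀ k : Fin m, ⟪BN k e, BD k e⟫
        = ⟪BN k u, BD k e⟫ - δ⁻¹ * ‖BD k e‖ ^ 2 := by
      intro k
      have h1 : BN k e = BN k u - BN k uδ := by rw [he, map_sub]
      rw [h1, inner_sub_left, key3 k, real_inner_smul_left,
        real_inner_self_eq_norm_sq]
    rw [Finset.sum_congr rfl fun k _ => hterm k, Finset.sum_sub_distrib,
      ← Finset.mul_sum]
  -- Young: ⟪BN u, BD e⟫ ≤ (δ ‖BN u‖² + δ⁻¹ ‖BD e‖²)/2
  have hyoung : ∀ k : Fin m, ⟪BN k u, BD k e⟫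
      ≤ (δ * ‖BN k u‖ ^ 2 + δ⁻¹ * ‖BD k e‖ ^ 2) / 2 := by
    intro k
    have h1 : ⟪BN k u, BD k e⟫ ≤ ‖BN k u‖ * ‖BD k e‖ :=
      real_inner_le_norm _ _
    have h2 : ‖BN k u‖ * ‖BD k e‖
        ≤ (δ * ‖BN k u‖ ^ 2 + δ⁻¹ * ‖BD k e‖ ^ 2) / 2 := by
      have hs := sq_nonneg (δ * ‖BN k u‖ - ‖BD k e‖)
      have hinv : δ⁻¹ * δ = 1 := inv_mul_cancel₀ hδ'
      rw [le_div_iff₀ (by norm_num : (0:ℝ) < 2)]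
      nlinarith [hs, hδ, hinv, mul_pos hδ hδ]
    linarith
  have hsum_young : ∑ k, ⟪BN k u, BD k e⟫ ≤ (δ * A + δ⁻¹ * B) / 2 := by
    calc ∑ k, ⟪BN k u, BD k e⟫
        ≤ ∑ k, (δ * ‖BN k u‖ ^ 2 + δ⁻¹ * ‖BD k e‖ ^ 2) / 2 :=
          Finset.sum_le_sum fun k _ => hyoung k
      _ = (δ * A + δ⁻¹ * B) / 2 := by
          rw [hA, hB, Finset.mul_sum, Finset.mul_sum, ← Finset.sum_add_distrib,
            ← Finset.sum_div]
  -- E ≤ δ A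
  have hE : a e e + δ⁻¹ * B ≤ δ * A := by
    have h1 : a e e + δ⁻¹ * B ≤ (δ * A + δ⁻¹ * B) / 2 := by
      rw [haee]; linarith
    have h2 : 0 ≤ a e e := hpsd e
    linarith
  have hEpos : 0 ≤ a e e + δ⁻¹ * B := by
    have := hpsd e
    have : 0 ≤ δ⁻¹ * B := mul_nonneg (inv_nonneg.mpr hδ.le) hBnn
    linarith [hpsd e]
  have part1 : a e e + δ⁻¹ * B ≤ 4 * δ * A := by
    nlinarith [mul_nonneg hδ.le hAnn]
  refine ⟨part1, ?_⟩
  -- ∑ ‖BN u‖ ≤ C S2m u, and A ≤ (∑ ‖BN u‖)²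
  have hBNsum : ∑ k, ‖BN k u‖ ≤ C * S2m u := by
    have h1 : ∑ k, ‖BN k u‖ ≤ ∑ k, (‖BD k u‖ + ‖BN k u‖) :=
      Finset.sum_le_sum fun k _ => le_add_of_nonneg_left (norm_nonneg _)
    linarith
  have hAle : A ≤ (C * S2m u) ^ 2 := by
    have h1 : A ≤ (∑ k, ‖BN k u‖) ^ 2 := by
      rw [hA]
      calc ∑ k, ‖BN k u‖ ^ 2
          ≤ ∑ k, ‖BN k u‖ * ∑ j, ‖BN j u‖ := by
            refine Finset.sum_le_sum fun k _ => ?_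
            rw [pow_two]
            exact mul_le_mul_of_nonneg_left
              (Finset.single_le_sum (f := fun j => ‖BN j u‖) (fun j _ => norm_nonneg _)
                (Finset.mem_univ k)) (norm_nonneg _)
        _ = (∑ k, ‖BN k u‖) ^ 2 := by rw [← Finset.sum_mul, pow_two]
    have h2 : (0:ℝ) ≤ ∑ k, ‖BN k u‖ :=
      Finset.sum_nonneg fun k _ => norm_nonneg _
    have h3 : (∑ k, ‖BN k u‖) ^ 2 ≤ (C * S2m u) ^ 2 := by
      exact pow_le_pow_left₀ h2 hBNsum 2
    linarith
  have hfinal : a e e + δ⁻¹ * B ≤ (2 * Real.sqrt δ * C * S2m u) ^ 2 := by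
    have hsq : Real.sqrt δ ^ 2 = δ := Real.sq_sqrt hδ.le
    have : (2 * Real.sqrt δ * C * S2m u) ^ 2 = 4 * δ * (C * S2m u) ^ 2 := by
      ring_nf
      nlinarith [hsq]
    rw [this]
    calc a e e + δ⁻¹ * B ≤ 4 * δ * A := part1
      _ ≤ 4 * δ * (C * S2m u) ^ 2 := by
          exact mul_le_mul_of_nonneg_left hAle (by positivity)
  have hrhs : 0 ≤ 2 * Real.sqrt δ * C * S2m u := by positivity
  calc Real.sqrt (a e e + δ⁻¹ * B)
      ≤ Real.sqrt ((2 * Real.sqrt δ * C * S2m u) ^ 2) :=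
        Real.sqrt_le_sqrt hfinal
    _ = 2 * Real.sqrt δ * C * S2m u := Real.sqrt_sq hrhs
end

section
/- Let u_δ solve the penalized variational problem J_δ(u_δ) = min_{v ∈ H^m(Ω)} J_δ(v) and let u_N minimize J_δ over a subset V_N ⊂ H^m(Ω). Then ‖u_N - u_δ‖_{a,δ} ≲ (1 + δ^{-1/2}) inf_{v_N ∈ V_N} ‖v_N - u_δ‖_{H^m(Ω)}. -/
open RealInnerProductSpace

/-- Quasi-optimality of the minimizer of the penalized energy over a subset.
Abstract setting: `a` is the energy form, `B_D^k` the Dirichlet boundary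
operators, `Sm` the `H^m(Ω)` norm, with continuity `a(v,v) ≤ C_a Sm(v)²` and the
trace inequality `∑_k ‖B_D^k v‖² ≤ C_t Sm(v)²`. If `u_δ` solves the penalized
variational problem and `u_N` minimizes `J_δ` over `V_N`, then
`‖u_N - u_δ‖_{a,δ} ≲ (1 + δ^{-1/2}) inf_{v_N ∈ V_N} ‖v_N - u_δ‖_{H^m(Ω)}`. -/
theorem penalized_subset_minimizer_quasioptimal {V H : Type*}
    [AddCommGroup V] [Module ℝ V] [NormedAddCommGroup H] [InnerProductSpace ℝ H]
    (m : ℕ) (a : V →ₗ[ℝ] V →ₗ[ℝ] ℝ)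
    (hsym : ∀ v w, a v w = a w v)
    (hpsd : ∀ v, 0 ≤ a v v)
    (BD : Fin m → V →ₗ[ℝ] H)
    (Sm : V → ℝ) (hSm : ∀ v, 0 ≤ Sm v)
    (Ca Ct : ℝ) (hCa : 0 < Ca) (hCt : 0 < Ct)
    (ha : ∀ v, a v v ≤ Ca * Sm v ^ 2)
    (htrace : ∀ v, ∑ k, ‖BD k v‖ ^ 2 ≤ Ct * Sm v ^ 2) :
    ∃ C > (0:ℝ), ∀ δ : ℝ, 0 < δ → ∀ (F : V →ₗ[ℝ] ℝ) (uδ uN : V) (VN : Set V),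
      uN ∈ VN →
      (∀ v, a uδ v + δ⁻¹ * ∑ k, ⟪BD k uδ, BD k v⟫ = F v) →
      (∀ v ∈ VN,
        (1 / 2 : ℝ) * (a uN uN + δ⁻¹ * ∑ k, ‖BD k uN‖ ^ 2) - F uN
          ≤ (1 / 2 : ℝ) * (a v v + δ⁻¹ * ∑ k, ‖BD k v‖ ^ 2) - F v) →
      Real.sqrt (a (uN - uδ) (uN - uδ) + δ⁻¹ * ∑ k, ‖BD k (uN - uδ)‖ ^ 2)
        ≤ C * (1 + δ ^ (-(1:ℝ)/2)) * ⨅ v : VN, Sm ((v : V) - uδ) := by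
  refine ⟨Real.sqrt (Ca + Ct), Real.sqrt_pos.mpr (by linarith), ?_⟩
  intro δ hδ F uδ uN VN huN heuler hmin
  have hδi : (0:ℝ) < δ⁻¹ := inv_pos.mpr hδ
  set b : V → V → ℝ := fun u v => a u v + δ⁻¹ * ∑ k, ⟪BD k u, BD k v⟫ with hb
  have hbn : ∀ v, b v v = a v v + δ⁻¹ * ∑ k, ‖BD k v‖ ^ 2 := by
    intro v; simp [hb, real_inner_self_eq_norm_sq]
  have hsymb : ∀ u v, b u v = b v u := by
    intro u v
    simp only [hb, hsym u v]
    congr 1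
    congr 1
    exact Finset.sum_congr rfl fun k _ => real_inner_comm _ _
  have hexp : ∀ u w, b (u - w) (u - w) = b u u - 2 * b u w + b w w := by
    intro u w
    have ha' : a (u - w) (u - w) = a u u - 2 * (a u w) + a w w := by
      simp only [map_sub, LinearMap.sub_apply]
      rw [hsym w u]; ring
    have hi : ∀ k : Fin m, ⟪BD k (u - w), BD k (u - w)⟫
        = ⟪BD k u, BD k u⟫ - 2 * ⟪BD k u, BD k w⟫ + ⟪BD k w, BD k w⟫ := by
      intro k; rw [map_sub]; exact real_inner_sub_sub_self _ _
    simp only [hb, ha', Finset.sum_congr rfl (fun k _ => hi k),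
      Finset.sum_add_distrib, Finset.sum_sub_distrib, ← Finset.mul_sum]
    ring
  have heul : ∀ w, b uδ w = F w := heuler
  have hJ : ∀ w, b (w - uδ) (w - uδ)
      = (a w w + δ⁻¹ * ∑ k, ‖BD k w‖ ^ 2) - 2 * F w + b uδ uδ := by
    intro w
    rw [hexp w uδ, hbn w, hsymb w uδ, heul w]
  -- quasi-optimality at the level of b
  have hkey : ∀ w ∈ VN, b (uN - uδ) (uN - uδ) ≤ b (w - uδ) (w - uδ) := by
    intro w hw
    rw [hJ uN, hJ w]
    have := hmin w hw
    linarith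
  -- continuity bound
  have hcont : ∀ w, b w w ≤ (Ca + Ct) * (1 + δ⁻¹) * Sm w ^ 2 := by
    intro w
    rw [hbn w]
    have h1 := ha w
    have h2 := mul_le_mul_of_nonneg_left (htrace w) hδi.le
    nlinarith [mul_nonneg hδi.le (mul_nonneg hCa.le (sq_nonneg (Sm w))),
      mul_nonneg hCt.le (sq_nonneg (Sm w))]
  have hsδ : 0 < Real.sqrt δ := Real.sqrt_pos.mpr hδ
  have hrpow : δ ^ (-(1:ℝ)/2) = (Real.sqrt δ)⁻¹ := by
    rw [show (-(1:ℝ)/2) = -(1/2) by ring, Real.rpow_neg hδ.le, ← Real.sqrt_eq_rpow]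
  have hs : Real.sqrt (1 + δ⁻¹) ≤ 1 + δ ^ (-(1:ℝ)/2) := by
    rw [hrpow]
    have hsq : (Real.sqrt δ) ^ 2 = δ := Real.sq_sqrt hδ.le
    have hinv : ((Real.sqrt δ)⁻¹) ^ 2 = δ⁻¹ := by rw [inv_pow, hsq]
    have h4 : 1 + δ⁻¹ ≤ (1 + (Real.sqrt δ)⁻¹) ^ 2 := by
      nlinarith [inv_nonneg.mpr hsδ.le]
    calc Real.sqrt (1 + δ⁻¹) ≤ Real.sqrt ((1 + (Real.sqrt δ)⁻¹) ^ 2) :=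
          Real.sqrt_le_sqrt h4
      _ = 1 + (Real.sqrt δ)⁻¹ := Real.sqrt_sq (by positivity)
  have hrpos : (0:ℝ) < 1 + δ ^ (-(1:ℝ)/2) := by rw [hrpow]; positivity
  set c : ℝ := Real.sqrt (Ca + Ct) * (1 + δ ^ (-(1:ℝ)/2)) with hc
  have hcpos : 0 < c := mul_pos (Real.sqrt_pos.mpr (by linarith)) hrpos
  have hmain : ∀ w ∈ VN,
      Real.sqrt (a (uN - uδ) (uN - uδ) + δ⁻¹ * ∑ k, ‖BD k (uN - uδ)‖ ^ 2)
        ≤ c * Sm (w - uδ) := by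
    intro w hw
    rw [← hbn]
    have h1 : b (uN - uδ) (uN - uδ) ≤ (Ca + Ct) * (1 + δ⁻¹) * Sm (w - uδ) ^ 2 :=
      (hkey w hw).trans (hcont _)
    calc Real.sqrt (b (uN - uδ) (uN - uδ))
        ≤ Real.sqrt ((Ca + Ct) * (1 + δ⁻¹) * Sm (w - uδ) ^ 2) :=
          Real.sqrt_le_sqrt h1
      _ = Real.sqrt (Ca + Ct) * Real.sqrt (1 + δ⁻¹) * Sm (w - uδ) := by
          rw [Real.sqrt_mul (by positivity), Real.sqrt_mul (by positivity),
            Real.sqrt_sq (hSm _)]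
      _ ≤ Real.sqrt (Ca + Ct) * (1 + δ ^ (-(1:ℝ)/2)) * Sm (w - uδ) :=
          mul_le_mul_of_nonneg_right
            (mul_le_mul_of_nonneg_left hs (Real.sqrt_nonneg _)) (hSm _)
  set L : ℝ := Real.sqrt (a (uN - uδ) (uN - uδ) + δ⁻¹ * ∑ k, ‖BD k (uN - uδ)‖ ^ 2)
    with hL
  have hinf : L / c ≤ ⨅ v : VN, Sm ((v : V) - uδ) := by
    have : Nonempty VN := ⟨⟨uN, huN⟩⟩
    exact le_ciInf fun v => (div_le_iff₀ hcpos).mpr (by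
      have := hmain v v.2
      linarith [this])
  calc L = c * (L / c) := by field_simp
    _ ≤ c * ⨅ v : VN, Sm ((v : V) - uδ) :=
        mul_le_mul_of_nonneg_left hinf hcpos.le
    _ = Real.sqrt (Ca + Ct) * (1 + δ ^ (-(1:ℝ)/2)) * ⨅ v : VN, Sm ((v : V) - uδ) := by
        rw [hc]
end
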